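/- Let I be a finite set, h : I → ℝ with h_E > 0 for all E ∈ I, u, w : I → ℝ with u_E ≥ 0 and w_E ≥ 0 for all E ∈ I, and let r ≥ 2 and δ ≥ 0 be real numbers. Then Σ_{E∈I} (δ^r + h_E^{−r} u_E^r)^{(r−2)/r} u_E w_E ≤ ( Σ_{E∈I} h_E² δ^r + Σ_{E∈I} h_E^{2−r} u_E^r )^{(r−2)/(2r)} · ( Σ_{E∈I} (δ^r + h_E^{−r} u_E^r)^{(r−2)/r} u_E² )^{1/2} · ( Σ_{E∈I} h_E^{2−r} w_E^r )^{1/r}. -/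

import Mathlib

/-! With `S_E = δ^r + h_E^{-r} u_E^r`, the summand `S_E^{(r-2)/r} u_E w_E` factors as
`a_E^{(r-2)/(2r)} b_E^{1/2} c_E^{1/r}` with `a_E = h_E² S_E`, `b_E = S_E^{(r-2)/r} u_E²` and
`c_E = h_E^{2-r} w_E^r` (the powers of `h_E` cancel). The exponents sum to one, so Hölder's
inequality for three finite sums applies, and `∑ a_E` is exactly the first factor of the bound. -/

open Finset Real MeasureTheory

theorem Real.sum_prod_rpow_le_prod_sum_rpow {ι κ : Type*} [Fintype ι] (s : Finset κ)
    {f : κ → ι → ℝ} (hf : ∀ j ∈ s, ∀ i, 0 ≤ f j i) {p : κ → ℝ} (hp : ∑ j ∈ s, p j = 1)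
    (h2p : ∀ j ∈ s, 0 ≤ p j) :
    ∑ i, ∏ j ∈ s, f j i ^ p j ≤ ∏ j ∈ s, (∑ i, f j i) ^ p j := by
  let _ : MeasurableSpace ι := ⊤
  have holder := ENNReal.lintegral_prod_norm_pow_le (μ := Measure.count) s
    (f := fun j i => ENNReal.ofReal (f j i)) (fun _ _ => measurable_from_top.aemeasurable) hp h2p
  simp only [lintegral_count, tsum_fintype] at holder
  have hsum : ∀ j ∈ s, 0 ≤ ∑ i, f j i := fun j hj => sum_nonneg fun i _ => hf j hj i
  have ofReal_lhs : ∑ i, ∏ j ∈ s, ENNReal.ofReal (f j i) ^ p j =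
      ENNReal.ofReal (∑ i, ∏ j ∈ s, f j i ^ p j) := by
    rw [ENNReal.ofReal_sum_of_nonneg fun i _ => prod_nonneg fun j hj => rpow_nonneg (hf j hj i) _]
    refine sum_congr rfl fun i _ => ?_
    rw [ENNReal.ofReal_prod_of_nonneg fun j hj => rpow_nonneg (hf j hj i) _]
    exact prod_congr rfl fun j hj => ENNReal.ofReal_rpow_of_nonneg (hf j hj i) (h2p j hj)
  have ofReal_rhs : ∏ j ∈ s, (∑ i, ENNReal.ofReal (f j i)) ^ p j =
      ENNReal.ofReal (∏ j ∈ s, (∑ i, f j i) ^ p j) := by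
    rw [ENNReal.ofReal_prod_of_nonneg fun j hj => rpow_nonneg (hsum j hj) _]
    refine prod_congr rfl fun j hj => ?_
    rw [← ENNReal.ofReal_sum_of_nonneg fun i _ => hf j hj i]
    exact ENNReal.ofReal_rpow_of_nonneg (hsum j hj) (h2p j hj)
  rwa [ofReal_lhs, ofReal_rhs,
    ENNReal.ofReal_le_ofReal_iff (prod_nonneg fun j hj => rpow_nonneg (hsum j hj) _)] at holder

theorem Real.sum_rpow_mul_rpow_mul_rpow_le {ι : Type*} [Fintype ι] {a b c : ι → ℝ}
    (ha : ∀ i, 0 ≤ a i) (hb : ∀ i, 0 ≤ b i) (hc : ∀ i, 0 ≤ c i) {p q t : ℝ}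
    (hp : 0 ≤ p) (hq : 0 ≤ q) (ht : 0 ≤ t) (hpqt : p + q + t = 1) :
    ∑ i, a i ^ p * b i ^ q * c i ^ t ≤ (∑ i, a i) ^ p * (∑ i, b i) ^ q * (∑ i, c i) ^ t := by
  have := Real.sum_prod_rpow_le_prod_sum_rpow univ (f := ![a, b, c]) (p := ![p, q, t])
    (by simp [Fin.forall_fin_succ, ha, hb, hc]) (by simp [Fin.sum_univ_three, hpqt])
    (by simp [Fin.forall_fin_succ, hp, hq, ht])
  simpa [Fin.prod_univ_three] using this

lemma rpow_mul_mul_eq_rpow_mul_rpow_mul_rpow {h S u w r : ℝ} (hh : 0 < h) (hS : 0 ≤ S)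
    (hu : 0 ≤ u) (hw : 0 ≤ w) (hr : r ≠ 0) :
    S ^ ((r - 2) / r) * u * w =
      (h ^ 2 * S) ^ ((r - 2) / (2 * r)) * (S ^ ((r - 2) / r) * u ^ 2) ^ (1 / 2 : ℝ) *
        (h ^ (2 - r) * w ^ r) ^ (1 / r) := by
  set k := (r - 2) / (2 * r)
  have hk : k * 2 = (r - 2) / r := by simp only [k]; field_simp
  have h_factor : (h ^ 2 * S) ^ k = h ^ (k * 2) * S ^ k := by
    rw [mul_rpow (by positivity) hS, ← rpow_natCast_mul hh.le, Nat.cast_ofNat, mul_comm 2 k]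
  have u_factor : (S ^ (k * 2) * u ^ 2) ^ (1 / 2 : ℝ) = S ^ k * u := by
    rw [mul_rpow (by positivity) (by positivity), ← rpow_mul hS, ← rpow_natCast_mul hu,
      Nat.cast_ofNat, mul_one_div_cancel two_ne_zero, rpow_one, mul_assoc,
      mul_one_div_cancel two_ne_zero, mul_one]
  have w_factor : (h ^ (2 - r) * w ^ r) ^ (1 / r) = h ^ ((2 - r) / r) * w := by
    rw [mul_rpow (by positivity) (by positivity), ← rpow_mul hh.le, ← rpow_mul hw,
      mul_one_div, mul_one_div_cancel hr, rpow_one]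
  have h_cancel : h ^ (k * 2) * h ^ ((2 - r) / r) = 1 := by
    rw [← rpow_add hh, hk, ← add_div, sub_add_sub_cancel', sub_self, zero_div, rpow_zero]
  have S_double : S ^ k * S ^ k = S ^ (k * 2) := by
    rw [← sq, ← rpow_mul_natCast hS, Nat.cast_ofNat]
  rw [← hk, h_factor, u_factor, w_factor]
  linear_combination (-(S ^ k * S ^ k * u * w)) * h_cancel - u * w * S_double

theorem discrete_three_term_holder
    {ι : Type*} [Fintype ι]
    (h u w : ι → ℝ) (hh : ∀ E, 0 < h E) (hu : ∀ E, 0 ≤ u E) (hw : ∀ E, 0 ≤ w E)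
    (r δ : ℝ) (hr : 2 ≤ r) (hδ : 0 ≤ δ) :
    ∑ E, (δ ^ r + h E ^ (-r) * u E ^ r) ^ ((r - 2) / r) * u E * w E ≤
      ((∑ E, h E ^ 2 * δ ^ r) + ∑ E, h E ^ (2 - r) * u E ^ r) ^ ((r - 2) / (2 * r)) *
        (∑ E, (δ ^ r + h E ^ (-r) * u E ^ r) ^ ((r - 2) / r) * u E ^ 2) ^ (1 / 2 : ℝ) *
        (∑ E, h E ^ (2 - r) * w E ^ r) ^ (1 / r) := by
  have hr0 : 0 < r := by linarith
  have hS : ∀ E, 0 ≤ δ ^ r + h E ^ (-r) * u E ^ r := fun E => by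
    have := hh E; have := hu E; positivity
  have h_sq_mul : ∀ E, h E ^ 2 * (δ ^ r + h E ^ (-r) * u E ^ r) =
      h E ^ 2 * δ ^ r + h E ^ (2 - r) * u E ^ r := fun E => by
    rw [mul_add, ← mul_assoc, ← rpow_natCast, ← rpow_add (hh E), Nat.cast_ofNat, sub_eq_add_neg]
  rw [← sum_add_distrib, ← sum_congr rfl fun E _ => h_sq_mul E]
  calc _ = ∑ E, (h E ^ 2 * (δ ^ r + h E ^ (-r) * u E ^ r)) ^ ((r - 2) / (2 * r)) *
          ((δ ^ r + h E ^ (-r) * u E ^ r) ^ ((r - 2) / r) * u E ^ 2) ^ (1 / 2 : ℝ) *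
          (h E ^ (2 - r) * w E ^ r) ^ (1 / r) :=
        sum_congr rfl fun E _ =>
          rpow_mul_mul_eq_rpow_mul_rpow_mul_rpow (hh E) (hS E) (hu E) (hw E) hr0.ne'
    _ ≤ _ := Real.sum_rpow_mul_rpow_mul_rpow_le (fun E => mul_nonneg (sq_nonneg _) (hS E))
        (fun E => by have := hS E; positivity) (fun E => by have := hh E; have := hw E; positivity)
        (div_nonneg (by linarith) (by linarith)) (by norm_num) (by positivity)
        (by field_simp; ring)
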